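/- arXiv:1709.04011 — 2 statements merged into one kernel-verified Lean document; each statement's English description precedes it below -/
import Mathlib

section
/- For any activation class A of a bidirected graph G and vertices u, w, the refinement of A by the relation c ~_{uw} d iff c(h_u) = d(h_u) = w splits A into two complementary principal order ideals of the boolean lattice A: the principal lower order ideal generated by the unique maximal element M(u;u;A) satisfying c(h_u)=u, and (when nonempty) the principal upper order ideal generated by the unique minimal element m(u;w;A) satisfying c(h_u)=w with w≠u. The upper ideal is empty if and only if c(h_u)=u for all c in A. -/
open scoped Classical

/-- An oriented hypergraph on vertex set `V`: edges `E`, incidences `I`,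
incidence function given by `vtx` and `edge`, and incidence orientations `sgn`. -/
structure OrientedHypergraph (V : Type) [Fintype V] [DecidableEq V] where
  E : Type
  I : Type
  [fintypeE : Fintype E]
  [fintypeI : Fintype I]
  [decEqI : DecidableEq I]
  vtx : I → V
  edge : I → E
  sgn : I → ℤ

attribute [instance] OrientedHypergraph.fintypeE OrientedHypergraph.fintypeI
  OrientedHypergraph.decEqI

variable {V : Type} [Fintype V] [DecidableEq V]

/-- A bidirected graph: an oriented hypergraph in which every edge has exactly two
incidences, recorded by the fixed-point-free involution `τ` pairing the two
incidences of each edge. -/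
structure Bidirected (V : Type) [Fintype V] [DecidableEq V]
    extends OrientedHypergraph V where
  τ : I → I
  τ_invol : ∀ i, τ (τ i) = i
  τ_ne : ∀ i, τ i ≠ i
  τ_edge : ∀ i, edge (τ i) = edge i
  edge_two : ∀ i j, edge i = edge j → j = i ∨ j = τ i

/-- A pre-contributor: an incidence-preserving map of `|V|` disjoint directed paths
of length one into `G`, sending the tail `t_v` to `v`.  The component at `v` is the
weak walk with tail incidence `i1 v` and head incidence `i2 v`. -/
structure PreContributor (G : OrientedHypergraph V) where
  i1 : V → G.I
  i2 : V → G.I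
  tail_eq : ∀ v, G.vtx (i1 v) = v
  edge_eq : ∀ v, G.edge (i1 v) = G.edge (i2 v)

namespace PreContributor

variable {G : OrientedHypergraph V}

/-- The head vertex of the component of `p` at `v`: `p(h_v)`. -/
def head (p : PreContributor G) (v : V) : V := G.vtx (p.i2 v)

/-- A contributor: a pre-contributor whose heads cover `V`, `{p(h_v) | v ∈ V} = V`. -/
def IsContributor (p : PreContributor G) : Prop := Function.Surjective p.head

/-- The component of `p` at `v` is a backstep `(v,i,e,i,v)`. -/
def BackstepAt (p : PreContributor G) (v : V) : Prop := p.i2 v = p.i1 v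

/-- The sign of the length-one weak walk of `p` at `v`. -/
def walkSign (p : PreContributor G) (v : V) : ℤ := -(G.sgn (p.i1 v) * G.sgn (p.i2 v))

/-- Two vertices lie in the same component of the image of `p`. -/
def compRel (p : PreContributor G) : V → V → Prop :=
  Relation.EqvGen (fun v w => p.head v = w)

/-- The setoid of components of `p`. -/
def compSetoid (p : PreContributor G) : Setoid V := Relation.EqvGen.setoid (fun v w => p.head v = w)

/-- A component class is a (lone) backstep. -/
def IsBackstepClass (p : PreContributor G) (q : Quotient p.compSetoid) : Prop :=
  ∃ v, Quotient.mk p.compSetoid v = q ∧ p.head v = v ∧ p.BackstepAt v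

/-- The number of vertices in a component class. -/
noncomputable def compCard (p : PreContributor G) (q : Quotient p.compSetoid) : ℕ :=
  Nat.card {v : V // Quotient.mk p.compSetoid v = q}

/-- The sign of a component class: the product of the signs of its weak walks. -/
noncomputable def compSign (p : PreContributor G) (q : Quotient p.compSetoid) : ℤ :=
  ∏ᶠ v ∈ {v : V | Quotient.mk p.compSetoid v = q}, p.walkSign v

/-- `tc`: total number of circles of a contributor (backsteps do not count). -/
noncomputable def tc (p : PreContributor G) : ℕ :=
  Nat.card {q : Quotient p.compSetoid // ¬ p.IsBackstepClass q}

/-- `pc`: number of positive circles of a contributor. -/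
noncomputable def pc (p : PreContributor G) : ℕ :=
  Nat.card {q : Quotient p.compSetoid // ¬ p.IsBackstepClass q ∧ p.compSign q = 1}

/-- `nc`: number of negative circles of a contributor. -/
noncomputable def nc (p : PreContributor G) : ℕ :=
  Nat.card {q : Quotient p.compSetoid // ¬ p.IsBackstepClass q ∧ p.compSign q = -1}

/-- `oc`: number of odd circles of a contributor. -/
noncomputable def oc (p : PreContributor G) : ℕ :=
  Nat.card {q : Quotient p.compSetoid // ¬ p.IsBackstepClass q ∧ Odd (p.compCard q)}

/-- `ec`: number of even circles of a contributor. -/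
noncomputable def ec (p : PreContributor G) : ℕ :=
  Nat.card {q : Quotient p.compSetoid // ¬ p.IsBackstepClass q ∧ Even (p.compCard q)}

end PreContributor

/-- The `V × E` incidence matrix of an oriented hypergraph. -/
noncomputable def OrientedHypergraph.inc (G : OrientedHypergraph V) : Matrix V G.E ℤ :=
  fun v e => ∑ᶠ i ∈ {i : G.I | G.vtx i = v ∧ G.edge i = e}, G.sgn i

/-- The oriented hypergraphic Laplacian `L_G = H_G H_Gᵀ`. -/
noncomputable def OrientedHypergraph.lap (G : OrientedHypergraph V) : Matrix V V ℤ :=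
  G.inc * G.inc.transpose

namespace Bidirected

variable {G : Bidirected V}

/-- Packing the directed adjacency of `p` at `v` into a backstep. -/
def pack (G : Bidirected V) (p : PreContributor G.toOrientedHypergraph) (v : V) :
    PreContributor G.toOrientedHypergraph where
  i1 := p.i1
  i2 := fun u => if u = v then p.i1 v else p.i2 u
  tail_eq := p.tail_eq
  edge_eq := fun u => by by_cases h : u = v <;> simp [h, p.edge_eq u]

/-- Unpacking the backstep of `p` at `v` into the unique directed adjacency out of
`v` completing the edge. -/
def unpack (G : Bidirected V) (p : PreContributor G.toOrientedHypergraph) (v : V) :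
    PreContributor G.toOrientedHypergraph where
  i1 := p.i1
  i2 := fun u => if u = v then G.τ (p.i1 v) else p.i2 u
  tail_eq := p.tail_eq
  edge_eq := fun u => by
    by_cases h : u = v
    · simp [h, G.τ_edge]
    · simp [h, p.edge_eq u]

end Bidirected
namespace Bidirected

variable {V : Type} [Fintype V] [DecidableEq V]

/-- A sequence of vertices is a valid sequence of unpackings from `p`:
each step unpacks a backstep. -/
def UnpackSeqOK (G : Bidirected V) :
    PreContributor G.toOrientedHypergraph → List V → Prop
  | _, [] => True
  | p, v :: l => p.BackstepAt v ∧ UnpackSeqOK G (G.unpack p v) l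

/-- A sequence of vertices is a valid sequence of packings from `p`:
each step packs a directed adjacency. -/
def PackSeqOK (G : Bidirected V) :
    PreContributor G.toOrientedHypergraph → List V → Prop
  | _, [] => True
  | p, v :: l => ¬ p.BackstepAt v ∧ PackSeqOK G (G.pack p v) l

/-- `d` is obtained from `c` by activating a circle: a minimal sequence of
unpackings producing a new contributor, which has one more circle. -/
def Activates (G : Bidirected V) (c d : PreContributor G.toOrientedHypergraph) : Prop :=
  c.IsContributor ∧ d.IsContributor ∧
    ∃ l : List V, G.UnpackSeqOK c l ∧ List.foldl G.unpack c l = d ∧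
      d.tc = c.tc + 1 ∧
      ∀ l' : List V, l' <+: l → l' ≠ [] → l' ≠ l →
        ¬ (List.foldl G.unpack c l').IsContributor

/-- `d` is obtained from `c` by deactivating a circle: a minimal sequence of
packings producing a new contributor, which has one fewer circle. -/
def Deactivates (G : Bidirected V) (c d : PreContributor G.toOrientedHypergraph) : Prop :=
  c.IsContributor ∧ d.IsContributor ∧
    ∃ l : List V, G.PackSeqOK c l ∧ List.foldl G.pack c l = d ∧
      c.tc = d.tc + 1 ∧
      ∀ l' : List V, l' <+: l → l' ≠ [] → l' ≠ l →
        ¬ (List.foldl G.pack c l').IsContributor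

/-- The activation partial order `≤_a`. -/
def leA (G : Bidirected V) : PreContributor G.toOrientedHypergraph →
    PreContributor G.toOrientedHypergraph → Prop :=
  Relation.ReflTransGen G.Activates

/-- Activation equivalence `~_a`; its classes are the activation classes. -/
def ActEq (G : Bidirected V) (c d : PreContributor G.toOrientedHypergraph) : Prop :=
  G.leA c d ∨ G.leA d c

/-- Two vertices are linked by an edge of `G`. -/
def linkR (G : Bidirected V) (v w : V) : Prop :=
  ∃ i : G.I, G.vtx i = v ∧ G.vtx (G.τ i) = w

/-- Every connected component of `G` contains at least one adjacency
(an edge whose two incidences lie at two distinct vertices). -/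
def EveryComponentHasAdjacency (G : Bidirected V) : Prop :=
  ∀ v : V, ∃ w : V, Relation.EqvGen G.linkR v w ∧
    ∃ i : G.I, G.vtx i = w ∧ G.vtx (G.τ i) ≠ w

end Bidirected

/-!
Fix the tails of `c` and let `σ = G.unpackedHead c` send `v` to the far end of the edge at the
tail `t_v`. A pre-contributor with these tails is determined by the set `S` of vertices whose component is
unpacked, and its head map is `S.piecewise σ id`. It is a contributor iff `σ '' S = S`, i.e. iff
`S` is a union of periodic orbits of `σ`, and its circles are exactly these orbits. Activating a
circle therefore adds one orbit, so on the class of `c` the activation order is inclusion of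
`σ`-stable sets comparable with `S_c`. A member sends `h_u` away from `u` iff `u ∈ S` and
`σ u ≠ u`. The stable sets avoiding `u` have the greatest element `T \ orbit u`, where `T` is
`S_c` or the set of all periodic points, and those containing `u` have the least element
`orbit u` or `S_c ∪ orbit u`.
-/

namespace Function

open Set

variable {α : Type*} {f : α → α} {s t s₀ : Set α} {x y u : α}

def forwardOrbit (f : α → α) (x : α) : Set α := range fun n => f^[n] x

theorem mem_forwardOrbit_self (f : α → α) (x : α) : x ∈ forwardOrbit f x := ⟨0, rfl⟩

theorem mapsTo_forwardOrbit (f : α → α) (x : α) :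
    MapsTo f (forwardOrbit f x) (forwardOrbit f x) := by
  rintro _ ⟨n, rfl⟩
  exact ⟨n + 1, iterate_succ_apply' f n x⟩

theorem forwardOrbit_subset_of_mapsTo (hs : MapsTo f s s) (hx : x ∈ s) :
    forwardOrbit f x ⊆ s := by
  rintro _ ⟨n, rfl⟩
  exact hs.iterate n hx

theorem forwardOrbit_subset_of_mem (hy : y ∈ forwardOrbit f x) :
    forwardOrbit f y ⊆ forwardOrbit f x :=
  forwardOrbit_subset_of_mapsTo (mapsTo_forwardOrbit f x) hy

theorem mem_forwardOrbit_comm (hx : x ∈ periodicPts f) (hy : y ∈ forwardOrbit f x) :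
    x ∈ forwardOrbit f y := by
  obtain ⟨n, rfl⟩ := hy
  obtain ⟨p, hp, hpx⟩ := hx
  refine ⟨p * n - n, show f^[p * n - n] (f^[n] x) = x from ?_⟩
  rw [← iterate_add_apply, Nat.sub_add_cancel (Nat.le_mul_of_pos_left n hp)]
  exact (hpx.mul_const n).eq

theorem forwardOrbit_eq_of_mem (hx : x ∈ periodicPts f) (hy : y ∈ forwardOrbit f x) :
    forwardOrbit f y = forwardOrbit f x :=
  (forwardOrbit_subset_of_mem hy).antisymm
    (forwardOrbit_subset_of_mem (mem_forwardOrbit_comm hx hy))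

theorem image_forwardOrbit (hx : x ∈ periodicPts f) :
    f '' forwardOrbit f x = forwardOrbit f x := by
  obtain ⟨p, hp, hpx⟩ := hx
  refine (mapsTo_forwardOrbit f x).image_subset.antisymm ?_
  rintro _ ⟨n, rfl⟩
  refine ⟨f^[n + p - 1] x, ⟨_, rfl⟩, ?_⟩
  rw [← iterate_succ_apply' f, Nat.succ_eq_add_one, Nat.sub_add_cancel (by omega),
    iterate_add_apply, hpx.eq]

theorem disjoint_forwardOrbit_iff (hs : MapsTo f s s) (hx : x ∈ periodicPts f) :
    Disjoint s (forwardOrbit f x) ↔ x ∉ s := by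
  refine ⟨fun h hxs => h.notMem_of_mem_left hxs (mem_forwardOrbit_self f x), fun hxs => ?_⟩
  refine Set.disjoint_left.2 fun y hys hy => hxs ?_
  exact forwardOrbit_subset_of_mapsTo hs hys (mem_forwardOrbit_comm hx hy)

theorem eqvGen_iff_mem_forwardOrbit [Finite α] (hf : Injective f) :
    Relation.EqvGen (fun a b => f a = b) x y ↔ y ∈ forwardOrbit f x := by
  refine ⟨fun h => ?_, ?_⟩
  · induction h with
    | rel a b hab => exact ⟨1, hab⟩
    | refl a => exact mem_forwardOrbit_self f a
    | symm a b _ ih => exact mem_forwardOrbit_comm (hf.mem_periodicPts a) ih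
    | trans a b c _ _ ih₁ ih₂ => exact forwardOrbit_subset_of_mem ih₁ ih₂
  · rintro ⟨n, rfl⟩
    induction n with
    | zero => exact .refl x
    | succ n ih => exact .trans _ _ _ ih (.rel _ _ (iterate_succ_apply' f n x).symm)

theorem subset_periodicPts_of_image_eq [Finite α] (hs : f '' s = s) : s ⊆ periodicPts f := by
  intro x hx
  have hmaps : MapsTo f s s := mapsTo_iff_image_subset.2 hs.le
  have hsurj : Surjective (hmaps.restrict f s s) := by
    rintro ⟨y, hy⟩
    rw [← hs] at hy
    obtain ⟨z, hz, rfl⟩ := hy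
    exact ⟨⟨z, hz⟩, rfl⟩
  obtain ⟨n, hn, hper⟩ :=
    mem_periodicPts.1 ((Finite.injective_iff_surjective.2 hsurj).mem_periodicPts ⟨x, hx⟩)
  exact mk_mem_periodicPts hn (hper.map (fun _ => rfl : Semiconj Subtype.val _ f))

theorem image_sdiff_of_image_eq [Finite α] (hs : f '' s = s) (ht : f '' t = t) :
    f '' (s \ t) = s \ t := by
  have hinj : InjOn f (s ∪ t) :=
    (bijOn_periodicPts (f := f)).injOn.mono
      (union_subset (subset_periodicPts_of_image_eq hs) (subset_periodicPts_of_image_eq ht))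
  rw [(hinj.mono subset_union_left).image_sdiff,
    hinj.image_inter subset_union_left subset_union_right, hs, ht, sdiff_self_inter]

theorem surjective_piecewise_id_iff [Finite α] :
    Surjective (s.piecewise f id) ↔ f '' s = s := by
  refine ⟨fun h => ?_, fun h v => ?_⟩
  · have hsub : s ⊆ f '' s := fun v hv => by
      obtain ⟨w, hw⟩ := h v
      by_cases hws : w ∈ s
      · exact ⟨w, hws, by rwa [piecewise_eq_of_mem _ _ _ hws] at hw⟩
      · rw [piecewise_eq_of_notMem _ _ _ hws, id] at hw
        exact absurd (hw ▸ hv : w ∈ s) hws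
    exact (eq_of_subset_of_ncard_le hsub (ncard_image_le s.toFinite) (s.toFinite.image f)).symm
  · by_cases hv : v ∈ s
    · obtain ⟨w, hw, rfl⟩ := h.symm ▸ hv
      exact ⟨w, piecewise_eq_of_mem _ _ _ hw⟩
    · exact ⟨v, piecewise_eq_of_notMem _ _ _ hv⟩

theorem forwardOrbit_piecewise_id_of_mem (hs : MapsTo f s s) (hx : x ∈ s) :
    forwardOrbit (s.piecewise f id) x = forwardOrbit f x := by
  suffices h : ∀ n, (s.piecewise f id)^[n] x = f^[n] x by
    simp only [forwardOrbit, h]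
  intro n
  induction n with
  | zero => rfl
  | succ n ih =>
    rw [iterate_succ_apply', iterate_succ_apply', ih, piecewise_eq_of_mem _ _ _ (hs.iterate n hx)]

theorem image_forwardOrbit_forwardOrbit (hx : x ∈ periodicPts f) :
    forwardOrbit f '' forwardOrbit f x = {forwardOrbit f x} := by
  rw [image_congr fun y hy => forwardOrbit_eq_of_mem hx hy,
    Set.Nonempty.image_const ⟨x, mem_forwardOrbit_self f x⟩]

/-- With `f = G.unpackedHead c` and `s₀ = c.unpackedSet` this indexes the activation class of `c`
(`Bidirected.actEq_iff`). -/
def stableComparable (f : α → α) (s₀ : Set α) : Set (Set α) :=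
  {S | f '' S = S ∧ (S ⊆ s₀ ∨ s₀ ⊆ S)}

theorem exists_least_mem (hs₀ : f '' s₀ = s₀) (hu : u ∈ periodicPts f) :
    ∃ m ∈ stableComparable f s₀, u ∈ m ∧ ∀ S ∈ stableComparable f s₀, u ∈ S ↔ m ⊆ S := by
  have hO := image_forwardOrbit hu
  have huO := mem_forwardOrbit_self f u
  have hOS : ∀ S : Set α, f '' S = S → u ∈ S → forwardOrbit f u ⊆ S := fun S hS =>
    forwardOrbit_subset_of_mapsTo (mapsTo_iff_image_subset.2 hS.le)
  by_cases hu₀ : u ∈ s₀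
  · exact ⟨forwardOrbit f u, ⟨hO, Or.inl (hOS s₀ hs₀ hu₀)⟩, huO,
      fun S hS => ⟨hOS S hS.1, fun h => h huO⟩⟩
  · refine ⟨s₀ ∪ forwardOrbit f u, ⟨by rw [image_union, hs₀, hO], Or.inr subset_union_left⟩,
      Or.inr huO, fun S hS => ⟨fun huS => ?_, fun h => h (Or.inr huO)⟩⟩
    exact union_subset (hS.2.resolve_left fun h => hu₀ (h huS)) (hOS S hS.1 huS)

theorem exists_greatest_notMem [Finite α] (hs₀ : f '' s₀ = s₀) (hu : u ∈ periodicPts f) :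
    ∃ M ∈ stableComparable f s₀, u ∉ M ∧ ∀ S ∈ stableComparable f s₀, u ∉ S ↔ S ⊆ M := by
  set T := if u ∈ s₀ then s₀ else periodicPts f
  have hT : f '' T = T := by
    unfold T; split_ifs
    exacts [hs₀, (bijOn_periodicPts (f := f)).image_eq]
  have hsubT : ∀ S ∈ stableComparable f s₀, u ∉ S → S ⊆ T := by
    rintro S ⟨hS, hS₀⟩ huS
    unfold T; split_ifs with hu₀
    exacts [hS₀.resolve_right fun h => huS (h hu₀), subset_periodicPts_of_image_eq hS]
  have hcut : ∀ S ∈ stableComparable f s₀, u ∉ S ↔ S ⊆ T \ forwardOrbit f u := by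
    intro S hS
    rw [subset_sdiff, disjoint_forwardOrbit_iff (mapsTo_iff_image_subset.2 hS.1.le) hu]
    exact ⟨fun huS => ⟨hsubT S hS huS, huS⟩, And.right⟩
  have hM : f '' (T \ forwardOrbit f u) = T \ forwardOrbit f u :=
    image_sdiff_of_image_eq hT (image_forwardOrbit hu)
  refine ⟨T \ forwardOrbit f u, ⟨hM, ?_⟩, fun h => h.2 (mem_forwardOrbit_self f u), hcut⟩
  by_cases hu₀ : u ∈ s₀
  · exact Or.inl fun x hx => by simpa [T, hu₀] using hx.1
  · exact Or.inr ((hcut s₀ ⟨hs₀, Or.inl le_rfl⟩).1 hu₀)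

theorem exists_greatest_fixing [Finite α] (hs₀ : f '' s₀ = s₀) (u : α) :
    ∃ M ∈ stableComparable f s₀, (u ∈ M → f u = u) ∧
      ∀ S ∈ stableComparable f s₀, (u ∈ S → f u = u) ↔ S ⊆ M := by
  by_cases h : u ∈ periodicPts f ∧ f u ≠ u
  · obtain ⟨M, hM, huM, hmax⟩ := exists_greatest_notMem hs₀ h.1
    refine ⟨M, hM, fun hu => absurd hu huM, fun S hS => ?_⟩
    rw [← hmax S hS]
    exact ⟨fun hS hu => h.2 (hS hu), fun huS hu => absurd hu huS⟩
  · have hfix : u ∈ periodicPts f → f u = u := by tauto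
    refine ⟨periodicPts f, ⟨(bijOn_periodicPts (f := f)).image_eq,
      Or.inr (subset_periodicPts_of_image_eq hs₀)⟩, hfix, fun S hS => ?_⟩
    have hSP := subset_periodicPts_of_image_eq hS.1
    exact ⟨fun _ => hSP, fun _ hu => hfix (hSP hu)⟩

end Function

namespace PreContributor

variable {G : OrientedHypergraph V}

theorem ext {p q : PreContributor G} (h1 : p.i1 = q.i1) (h2 : p.i2 = q.i2) : p = q := by
  cases p; cases q; simp_all

def unpackedSet (p : PreContributor G) : Set V := {v | ¬ p.BackstepAt v}

end PreContributor

namespace Bidirected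

open Function Set PreContributor

variable {G : Bidirected V} {c p q d : PreContributor G.toOrientedHypergraph} {s t : Set V}
  {u v : V}

def unpackedHead (G : Bidirected V) (c : PreContributor G.toOrientedHypergraph) (v : V) : V :=
  G.vtx (G.τ (c.i1 v))

noncomputable def unpackOn (G : Bidirected V) (c : PreContributor G.toOrientedHypergraph)
    (s : Set V) : PreContributor G.toOrientedHypergraph where
  i1 := c.i1
  i2 v := if v ∈ s then G.τ (c.i1 v) else c.i1 v
  tail_eq := c.tail_eq
  edge_eq v := by by_cases h : v ∈ s <;> simp [h, G.τ_edge]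

theorem eq_unpackOn_unpackedSet (h : p.i1 = c.i1) : p = G.unpackOn c p.unpackedSet := by
  refine ext h (funext fun v => ?_)
  by_cases hv : p.BackstepAt v
  · have hv' : p.i2 v = p.i1 v := hv
    simp [unpackOn, unpackedSet, hv, hv', h]
  · have hτ : p.i2 v = G.τ (p.i1 v) := (G.edge_two _ _ (p.edge_eq v)).resolve_left hv
    simp [unpackOn, unpackedSet, hv, hτ, h]

theorem backstepAt_unpackOn_iff : (G.unpackOn c s).BackstepAt v ↔ v ∉ s := by
  by_cases h : v ∈ s <;> simp [BackstepAt, unpackOn, h, G.τ_ne]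

theorem unpackedSet_unpackOn : (G.unpackOn c s).unpackedSet = s :=
  Set.ext fun _ => not_iff_comm.1 backstepAt_unpackOn_iff.symm

theorem head_unpackOn : (G.unpackOn c s).head = s.piecewise (G.unpackedHead c) id := by
  funext v
  by_cases h : v ∈ s <;> simp [head, unpackOn, unpackedHead, h, c.tail_eq v]

theorem head_unpackOn_of_mem (h : u ∈ s) : (G.unpackOn c s).head u = G.unpackedHead c u := by
  rw [head_unpackOn, piecewise_eq_of_mem _ _ _ h]

theorem head_unpackOn_of_notMem (h : u ∉ s) : (G.unpackOn c s).head u = u := by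
  rw [head_unpackOn, piecewise_eq_of_notMem _ _ _ h, id]

theorem head_unpackOn_eq_self_iff :
    (G.unpackOn c s).head u = u ↔ (u ∈ s → G.unpackedHead c u = u) := by
  by_cases h : u ∈ s
  · simp [head_unpackOn_of_mem h, h]
  · simp [head_unpackOn_of_notMem h, h]

theorem unpack_unpackOn (v : V) : G.unpack (G.unpackOn c s) v = G.unpackOn c (insert v s) := by
  refine ext rfl (funext fun u => ?_)
  by_cases h : u = v <;> simp [unpack, unpackOn, h]

theorem isContributor_unpackOn_iff :
    (G.unpackOn c s).IsContributor ↔ G.unpackedHead c '' s = s := by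
  rw [IsContributor, head_unpackOn, surjective_piecewise_id_iff]

theorem image_unpackedHead_unpackedSet (hc : c.IsContributor) :
    G.unpackedHead c '' c.unpackedSet = c.unpackedSet :=
  isContributor_unpackOn_iff.1 (eq_unpackOn_unpackedSet (c := c) rfl ▸ hc)

theorem mk_eq_mk_unpackOn_iff (hs : G.unpackedHead c '' s = s) {a b : V} :
    Quotient.mk (G.unpackOn c s).compSetoid a = Quotient.mk _ b ↔
      a ∈ forwardOrbit (G.unpackOn c s).head b := by
  have hinj : Injective (G.unpackOn c s).head := by
    rw [head_unpackOn]
    exact Finite.injective_iff_surjective.2 (surjective_piecewise_id_iff.2 hs)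
  rw [eq_comm, Quotient.eq]
  exact eqvGen_iff_mem_forwardOrbit hinj

theorem isBackstepClass_mk_unpackOn_iff (hs : G.unpackedHead c '' s = s) :
    (G.unpackOn c s).IsBackstepClass (Quotient.mk _ v) ↔ v ∉ s := by
  have hmaps : MapsTo (G.unpackedHead c) s s := mapsTo_iff_image_subset.2 hs.le
  refine ⟨fun ⟨w, hwv, _, hw⟩ hv => ?_, fun hv => ⟨v, rfl, ?_, backstepAt_unpackOn_iff.2 hv⟩⟩
  · rw [mk_eq_mk_unpackOn_iff hs, head_unpackOn, forwardOrbit_piecewise_id_of_mem hmaps hv] at hwv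
    exact backstepAt_unpackOn_iff.1 hw (forwardOrbit_subset_of_mapsTo hmaps hv hwv)
  · rw [head_unpackOn, piecewise_eq_of_notMem _ _ _ hv, id]

theorem tc_unpackOn (hs : G.unpackedHead c '' s = s) :
    (G.unpackOn c s).tc = (forwardOrbit (G.unpackedHead c) '' s).ncard := by
  have hmaps : MapsTo (G.unpackedHead c) s s := mapsTo_iff_image_subset.2 hs.le
  set cls : Quotient (G.unpackOn c s).compSetoid → Set V := fun q => {w | Quotient.mk _ w = q}
  have hcls : ∀ v, cls (Quotient.mk _ v) = forwardOrbit (G.unpackOn c s).head v := fun v =>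
    Set.ext fun _ => mk_eq_mk_unpackOn_iff hs
  have hinj : Injective cls := by
    intro q q' h
    induction q using Quotient.inductionOn with
    | h v => exact (show v ∈ cls q' from h ▸ rfl)
  have himage : cls '' {q | ¬ (G.unpackOn c s).IsBackstepClass q} =
      forwardOrbit (G.unpackedHead c) '' s := by
    ext A
    constructor
    · rintro ⟨q, hq, rfl⟩
      induction q using Quotient.inductionOn with
      | h v =>
        have hv : v ∈ s := not_not.1 ((isBackstepClass_mk_unpackOn_iff hs).not.1 hq)
        exact ⟨v, hv, by rw [hcls, head_unpackOn, forwardOrbit_piecewise_id_of_mem hmaps hv]⟩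
    · rintro ⟨v, hv, rfl⟩
      refine ⟨Quotient.mk _ v, (isBackstepClass_mk_unpackOn_iff hs).not.2 (not_not.2 hv), ?_⟩
      rw [hcls, head_unpackOn, forwardOrbit_piecewise_id_of_mem hmaps hv]
  rw [tc, ← himage, ncard_image_of_injective _ hinj, ← Nat.card_coe_set_eq]
  rfl

theorem tc_unpackOn_union (hs : G.unpackedHead c '' s = s)
    (hv : v ∈ periodicPts (G.unpackedHead c)) (hvs : v ∉ s) :
    (G.unpackOn c (s ∪ forwardOrbit (G.unpackedHead c) v)).tc = (G.unpackOn c s).tc + 1 := by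
  have hnew : forwardOrbit (G.unpackedHead c) v ∉ forwardOrbit (G.unpackedHead c) '' s := by
    rintro ⟨w, hw, hwv⟩
    exact hvs (forwardOrbit_subset_of_mapsTo (mapsTo_iff_image_subset.2 hs.le) hw
      (hwv ▸ mem_forwardOrbit_self _ v))
  rw [tc_unpackOn hs, tc_unpackOn (by rw [image_union, hs, image_forwardOrbit hv]), image_union,
    image_forwardOrbit_forwardOrbit hv, union_singleton, ncard_insert_of_notMem hnew]

theorem foldl_unpack_unpackOn (l : List V) :
    l.foldl G.unpack (G.unpackOn c s) = G.unpackOn c (s ∪ {x | x ∈ l}) := by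
  induction l generalizing s with
  | nil => simp
  | cons v l ih =>
    rw [List.foldl_cons, unpack_unpackOn, ih]
    congr 1
    ext x
    simp only [mem_union, mem_insert_iff, mem_ofPred_eq, List.mem_cons]
    tauto

theorem unpackSeqOK_unpackOn {l : List V} (hl : l.Nodup) (hls : ∀ x ∈ l, x ∉ s) :
    G.UnpackSeqOK (G.unpackOn c s) l := by
  induction l generalizing s with
  | nil => trivial
  | cons v l ih =>
    obtain ⟨hvl, hl⟩ := List.nodup_cons.1 hl
    refine ⟨backstepAt_unpackOn_iff.2 (hls v List.mem_cons_self), ?_⟩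
    rw [unpack_unpackOn]
    refine ih hl fun x hx hxs => ?_
    rcases hxs with rfl | hxs
    exacts [hvl hx, hls x (List.mem_cons_of_mem v hx) hxs]

/-- Minimality: a nonempty stable part of a periodic orbit is the whole orbit. -/
theorem activates_unpackOn_union (hs : G.unpackedHead c '' s = s)
    (hv : v ∈ periodicPts (G.unpackedHead c)) (hvs : v ∉ s) :
    G.Activates (G.unpackOn c s) (G.unpackOn c (s ∪ forwardOrbit (G.unpackedHead c) v)) := by
  set O := forwardOrbit (G.unpackedHead c) v
  have hO : G.unpackedHead c '' O = O := image_forwardOrbit hv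
  have hdisj : Disjoint s O :=
    (disjoint_forwardOrbit_iff (mapsTo_iff_image_subset.2 hs.le) hv).2 hvs
  set l := O.toFinite.toFinset.toList
  have hmem : ∀ x, x ∈ l ↔ x ∈ O := by simp [l]
  have hl : l.Nodup := Finset.nodup_toList _
  have hls : ∀ x ∈ l, x ∉ s := fun x hx hxs => hdisj.notMem_of_mem_left hxs ((hmem x).1 hx)
  refine ⟨isContributor_unpackOn_iff.2 hs,
    isContributor_unpackOn_iff.2 (by rw [image_union, hs, hO]), l, unpackSeqOK_unpackOn hl hls,
    by rw [foldl_unpack_unpackOn]; exact congrArg _ (congrArg _ (Set.ext hmem)),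
    tc_unpackOn_union hs hv hvs, fun l' hl' hne hne' hC => hne' ?_⟩
  rw [foldl_unpack_unpackOn, isContributor_unpackOn_iff] at hC
  set L := {x | x ∈ l'}
  have hLO : L ⊆ O := fun x hx => (hmem x).1 (hl'.subset hx)
  have hL : G.unpackedHead c '' L = L := by
    rw [← union_sdiff_cancel_left (s := s) (t := L) fun x hx => hls x (hl'.subset hx.2) hx.1]
    exact image_sdiff_of_image_eq hC hs
  obtain ⟨y, hy⟩ := List.exists_mem_of_ne_nil l' hne
  have hOL : O ⊆ L := by
    rw [show O = _ from (forwardOrbit_eq_of_mem hv (hLO hy)).symm]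
    exact forwardOrbit_subset_of_mapsTo (mapsTo_iff_image_subset.2 hL.le) hy
  exact hl'.eq_of_length (hl'.length_le.antisymm
    (hl.subperm fun x hx => hOL ((hmem x).1 hx)).length_le)

theorem i1_foldl_unpack (l : List V) (p : PreContributor G.toOrientedHypergraph) :
    (l.foldl G.unpack p).i1 = p.i1 := by
  induction l generalizing p with
  | nil => rfl
  | cons v l ih => exact ih _

theorem unpackedSet_subset_foldl_unpack (l : List V) (p : PreContributor G.toOrientedHypergraph) :
    p.unpackedSet ⊆ (l.foldl G.unpack p).unpackedSet := by
  induction l generalizing p with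
  | nil => exact le_rfl
  | cons v l ih =>
    refine subset_trans (fun x hx => ?_) (ih _)
    by_cases h : x = v <;> simp_all [unpackedSet, BackstepAt, unpack, G.τ_ne]

theorem Activates.i1_eq (h : G.Activates p q) : q.i1 = p.i1 := by
  obtain ⟨_, _, l, _, rfl, _⟩ := h
  exact i1_foldl_unpack l p

theorem Activates.unpackedSet_subset (h : G.Activates p q) : p.unpackedSet ⊆ q.unpackedSet := by
  obtain ⟨_, _, l, _, rfl, _⟩ := h
  exact unpackedSet_subset_foldl_unpack l p

theorem leA.i1_eq (h : G.leA p q) : q.i1 = p.i1 := by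
  induction h with
  | refl => rfl
  | tail _ hbc ih => exact hbc.i1_eq.trans ih

theorem leA.unpackedSet_subset (h : G.leA p q) : p.unpackedSet ⊆ q.unpackedSet := by
  induction h with
  | refl => exact le_rfl
  | tail _ hbc ih => exact ih.trans hbc.unpackedSet_subset

theorem leA.isContributor_iff (h : G.leA p q) : p.IsContributor ↔ q.IsContributor := by
  rcases h.cases_head with rfl | ⟨_, hp, _⟩
  · rfl
  rcases h.cases_tail with rfl | ⟨_, _, hq⟩
  · rfl
  exact iff_of_true hp.1 hq.2.1

theorem leA_unpackOn_of_subset {s t : Set V} (hs : G.unpackedHead c '' s = s)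
    (ht : G.unpackedHead c '' t = t) (hst : s ⊆ t) : G.leA (G.unpackOn c s) (G.unpackOn c t) := by
  by_cases hts : t ⊆ s
  · rw [hst.antisymm hts]
    exact .refl
  obtain ⟨v, hvt, hvs⟩ := not_subset.1 hts
  have hv := subset_periodicPts_of_image_eq ht hvt
  refine .head (activates_unpackOn_union hs hv hvs) (leA_unpackOn_of_subset
    (by rw [image_union, hs, image_forwardOrbit hv]) ht
    (union_subset hst (forwardOrbit_subset_of_mapsTo (mapsTo_iff_image_subset.2 ht.le) hvt)))
termination_by (t \ s).ncard
decreasing_by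
  refine ncard_lt_ncard ⟨sdiff_subset_sdiff_right subset_union_left, fun h => ?_⟩
  exact (h ⟨hvt, hvs⟩).2 (Or.inr (mem_forwardOrbit_self _ v))

theorem leA_unpackOn_iff (hs : G.unpackedHead c '' s = s) (ht : G.unpackedHead c '' t = t) :
    G.leA (G.unpackOn c s) (G.unpackOn c t) ↔ s ⊆ t :=
  ⟨fun h => by simpa only [unpackedSet_unpackOn] using h.unpackedSet_subset,
    leA_unpackOn_of_subset hs ht⟩

theorem actEq_iff (hc : c.IsContributor) :
    G.ActEq c d ↔
      ∃ S ∈ stableComparable (G.unpackedHead c) c.unpackedSet, d = G.unpackOn c S := by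
  have hc₀ : c = G.unpackOn c c.unpackedSet := eq_unpackOn_unpackedSet rfl
  have hs₀ := image_unpackedHead_unpackedSet hc
  constructor
  · intro h
    have hd : d.IsContributor :=
      h.elim (fun h => h.isContributor_iff.1 hc) (fun h => h.isContributor_iff.2 hc)
    have hd₀ : d = G.unpackOn c d.unpackedSet :=
      eq_unpackOn_unpackedSet (h.elim leA.i1_eq fun h => h.i1_eq.symm)
    refine ⟨d.unpackedSet, ⟨isContributor_unpackOn_iff.1 (hd₀ ▸ hd), ?_⟩, hd₀⟩
    exact h.elim (fun h => Or.inr h.unpackedSet_subset) fun h => Or.inl h.unpackedSet_subset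
  · rintro ⟨S, ⟨hS, hS₀ | hS₀⟩, rfl⟩
    · have h := leA_unpackOn_of_subset hS hs₀ hS₀
      rw [← hc₀] at h
      exact Or.inr h
    · have h := leA_unpackOn_of_subset hs₀ hS hS₀
      rw [← hc₀] at h
      exact Or.inl h

end Bidirected

theorem activation_class_cut_general {V : Type} [Fintype V] [DecidableEq V]
    (G : Bidirected V)
    (c : PreContributor G.toOrientedHypergraph) (hc : c.IsContributor) (u : V) :
    (∃ M : PreContributor G.toOrientedHypergraph, G.ActEq c M ∧ M.head u = u ∧
      ∀ d, G.ActEq c d → (d.head u = u ↔ G.leA d M)) ∧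
    ((∃ d, G.ActEq c d ∧ d.head u ≠ u) →
      ∃ w : V, w ≠ u ∧ ∃ m : PreContributor G.toOrientedHypergraph,
        G.ActEq c m ∧ m.head u = w ∧
        ∀ d, G.ActEq c d → (d.head u ≠ u ↔ (d.head u = w ∧ G.leA m d))) := by
  have hs₀ := Bidirected.image_unpackedHead_unpackedSet hc
  constructor
  · obtain ⟨M, hM, hMu, hmax⟩ := Function.exists_greatest_fixing hs₀ u
    refine ⟨G.unpackOn c M, (Bidirected.actEq_iff hc).2 ⟨M, hM, rfl⟩,
      Bidirected.head_unpackOn_eq_self_iff.2 hMu, fun d hd => ?_⟩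
    obtain ⟨S, hS, rfl⟩ := (Bidirected.actEq_iff hc).1 hd
    rw [Bidirected.head_unpackOn_eq_self_iff, Bidirected.leA_unpackOn_iff hS.1 hM.1]
    exact hmax S hS
  · rintro ⟨d₀, hd₀, hu₀⟩
    obtain ⟨S₀, hS₀, rfl⟩ := (Bidirected.actEq_iff hc).1 hd₀
    obtain ⟨huS₀, hfu⟩ : u ∈ S₀ ∧ G.unpackedHead c u ≠ u := by
      simpa only [ne_eq, Bidirected.head_unpackOn_eq_self_iff, Classical.not_imp] using hu₀
    obtain ⟨m, hm, hum, hmin⟩ :=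
      Function.exists_least_mem hs₀ (Function.subset_periodicPts_of_image_eq hS₀.1 huS₀)
    refine ⟨_, hfu, G.unpackOn c m, (Bidirected.actEq_iff hc).2 ⟨m, hm, rfl⟩,
      Bidirected.head_unpackOn_of_mem hum, fun d hd => ?_⟩
    obtain ⟨S, hS, rfl⟩ := (Bidirected.actEq_iff hc).1 hd
    rw [Bidirected.leA_unpackOn_iff hm.1 hS.1, ← hmin S hS]
    by_cases huS : u ∈ S
    · simp [Bidirected.head_unpackOn_of_mem huS, huS, hfu]
    · simp [Bidirected.head_unpackOn_of_notMem huS, huS]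

/-- For any activation class `A` (here the class of the contributor
`c`) of a bidirected graph `G` and a vertex `u`, the refinement of `A` by
`~_{uw}` splits `A` into two complementary principal order ideals: the principal
lower order ideal generated by the unique maximal element `M(u;u;A)` with head at
`u` mapping to `u`, and (when nonempty) the principal upper order ideal generated
by the unique minimal element `m(u;w;A)` whose head at `u` maps to some fixed
`w ≠ u`; the upper ideal is empty iff every member of `A` sends `h_u` to `u`. -/
theorem activation_class_cut {V : Type} [Fintype V] [DecidableEq V]
    (G : Bidirected V) (hG : G.EveryComponentHasAdjacency)
    (c : PreContributor G.toOrientedHypergraph) (hc : c.IsContributor) (u : V) :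
    (∃ M : PreContributor G.toOrientedHypergraph, G.ActEq c M ∧ M.head u = u ∧
      ∀ d, G.ActEq c d → (d.head u = u ↔ G.leA d M)) ∧
    ((∃ d, G.ActEq c d ∧ d.head u ≠ u) →
      ∃ w : V, w ≠ u ∧ ∃ m : PreContributor G.toOrientedHypergraph,
        G.ActEq c m ∧ m.head u = w ∧
        ∀ d, G.ActEq c d → (d.head u ≠ u ↔ (d.head u = w ∧ G.leA m d))) :=
  activation_class_cut_general G c hc u
end

section
/- All-minors contributor expansion: for an oriented hypergraph G and subsets U, W ⊆ V with |U| = |W|, the permanent of the minor [L_G]_{(U;W)} obtained by deleting rows U and columns W from the Laplacian equals ∑_{c ∈ C(U;W;G)} (−1)^{on(c)+nn(c)}, where C(U;W;G) is the set of sub-contributors c: ⨿_{u ∈ V∖U} P_1 → G with c(t_u)=u and {c(h_u)} = V∖W, and on(c), nn(c) count the odd and negative non-adjacency-trivial components (paths or circles) in the image of c. -/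
open scoped Classical

variable {V : Type} [Fintype V] [DecidableEq V]

/-- A sub-pre-contributor over `V ∖ U`: one directed path of length one out of each
vertex of `V ∖ U`, mapped into `G` preserving incidences. -/
structure SubPC {V : Type} [Fintype V] [DecidableEq V]
    (G : OrientedHypergraph V) (U : Set V) where
  i1 : {v : V // v ∉ U} → G.I
  i2 : {v : V // v ∉ U} → G.I
  tail_eq : ∀ v, G.vtx (i1 v) = v.val
  edge_eq : ∀ v, G.edge (i1 v) = G.edge (i2 v)

namespace SubPC

variable {V : Type} [Fintype V] [DecidableEq V] {G : OrientedHypergraph V} {U : Set V}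

/-- The head vertex of the component of `c` at `v`. -/
def head (c : SubPC G U) (v : {v : V // v ∉ U}) : V := G.vtx (c.i2 v)

/-- A sub-contributor in `C(U;W;G)`: tails at `V∖U`, heads landing bijectively
on `V∖W`. -/
def IsSubContributor (c : SubPC G U) (W : Set V) : Prop :=
  Function.Injective c.head ∧ Set.range c.head = {v : V | v ∉ W}

/-- The sign of the length-one weak walk of `c` at `v`. -/
def walkSign (c : SubPC G U) (v : {v : V // v ∉ U}) : ℤ :=
  -(G.sgn (c.i1 v) * G.sgn (c.i2 v))

/-- Two vertices of `V` lie in the same component of the image of `c`. -/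
def compRel (c : SubPC G U) : V → V → Prop :=
  Relation.EqvGen (fun v w => ∃ h : v ∉ U, c.head ⟨v, h⟩ = w)

/-- The setoid of components of the image of `c` on `V`. -/
def compSetoid (c : SubPC G U) : Setoid V :=
  Relation.EqvGen.setoid (fun v w => ∃ h : v ∉ U, c.head ⟨v, h⟩ = w)

/-- A component class is adjacency-trivial, i.e. a lone backstep. -/
def IsTrivialClass (c : SubPC G U) (q : Quotient c.compSetoid) : Prop :=
  ∃ v : {v : V // v ∉ U}, Quotient.mk c.compSetoid v.val = q ∧
    c.head v = v.val ∧ c.i2 v = c.i1 v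

/-- The number of weak walks (arcs) of `c` in a component class. -/
noncomputable def arcCard (c : SubPC G U) (q : Quotient c.compSetoid) : ℕ :=
  Nat.card {v : {v : V // v ∉ U} // Quotient.mk c.compSetoid v.val = q}

/-- The sign of a component class: the product of the signs of its weak walks. -/
noncomputable def compSign (c : SubPC G U) (q : Quotient c.compSetoid) : ℤ :=
  ∏ᶠ v ∈ {v : {v : V // v ∉ U} | Quotient.mk c.compSetoid v.val = q}, c.walkSign v

/-- `on`: the number of odd non-adjacency-trivial components of `c`. -/
noncomputable def onn (c : SubPC G U) : ℕ :=
  Nat.card {q : Quotient c.compSetoid // ¬ c.IsTrivialClass q ∧ Odd (c.arcCard q)}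

/-- `nn`: the number of negative non-adjacency-trivial components of `c`. -/
noncomputable def nn (c : SubPC G U) : ℕ :=
  Nat.card {q : Quotient c.compSetoid // ¬ c.IsTrivialClass q ∧ c.compSign q = -1}

end SubPC

/-- The permanent of a (square-shaped) rectangular matrix: the sum over all
bijections between the index types of the corresponding diagonal products. -/
noncomputable def rectPermanent {α β : Type*} (M : Matrix α β ℤ) : ℤ :=
  ∑ᶠ f : α ≃ β, ∏ᶠ a : α, M a (f a)

/-!
Expanding the permanent of the minor, and each Laplacian entry as
`L(v, w) = ∑ σ(i) σ(j)` over incidences `i` at `v` and `j` at `w` on a common edge, the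
nonzero terms are indexed exactly by the sub-contributors `c`, with weight
`∏_v σ(i₁ v) σ(i₂ v) = ∏_v (-1) · sgn(walk at v)`. Grouping the walks by component `q`, this
is `∏_q (-1)^{|q|} sgn(q) = ∏_q (-1)^{[q odd] + [q negative]}`. An adjacency-trivial component is a
lone backstep, of odd length and negative sign, so its two contributions cancel.
-/

open Finset

theorem rectPermanent_eq_sum {α β : Type*} [Fintype α] [Fintype β] [DecidableEq α]
    [DecidableEq β] (M : Matrix α β ℤ) :
    rectPermanent M = ∑ f : α ≃ β, ∏ a, M a (f a) := by
  simp only [rectPermanent, finsum_eq_sum_of_fintype, finprod_eq_prod_of_fintype]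

namespace OrientedHypergraph

/-- The weak walks of length one from `v` to `w`: incidence `i` at `v` and `j` at `w` on a
common edge (`i = j` is a backstep). -/
noncomputable def links (G : OrientedHypergraph V) (v w : V) : Finset (G.I × G.I) :=
  {p | G.vtx p.1 = v ∧ G.vtx p.2 = w ∧ G.edge p.1 = G.edge p.2}

@[simp]
theorem mem_links {G : OrientedHypergraph V} {v w : V} {p : G.I × G.I} :
    p ∈ G.links v w ↔ G.vtx p.1 = v ∧ G.vtx p.2 = w ∧ G.edge p.1 = G.edge p.2 := by
  simp [links]

theorem inc_apply (G : OrientedHypergraph V) (v : V) (e : G.E) :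
    G.inc v e = ∑ i with G.vtx i = v ∧ G.edge i = e, G.sgn i := by
  rw [inc, ← finsum_mem_coe_finset, coe_filter_univ]

theorem lap_apply (G : OrientedHypergraph V) (v w : V) :
    G.lap v w = ∑ p ∈ G.links v w, G.sgn p.1 * G.sgn p.2 := by
  simp only [lap, Matrix.mul_apply, Matrix.transpose_apply, inc_apply, sum_mul_sum, links,
    sum_filter, Fintype.sum_prod_type]
  rw [sum_comm]
  refine sum_congr rfl fun i _ => ?_
  rw [sum_comm]
  refine sum_congr rfl fun j _ => ?_
  have hcond : ∀ e, ((G.vtx i = v ∧ G.edge i = e) ∧ G.vtx j = w ∧ G.edge j = e) ↔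
      (G.edge i = e ∧ G.vtx i = v ∧ G.vtx j = w ∧ G.edge i = G.edge j) := by
    grind
  simp only [ite_zero_mul_ite_zero, hcond]
  simp only [ite_and, sum_ite_eq, mem_univ, if_true]

theorem prod_lap_eq_sum {ι : Type*} [Fintype ι] [DecidableEq ι] (G : OrientedHypergraph V)
    (t h : ι → V) :
    ∏ k, G.lap (t k) (h k) =
      ∑ g ∈ Fintype.piFinset fun k => G.links (t k) (h k),
        ∏ k, G.sgn (g k).1 * G.sgn (g k).2 := by
  simp only [lap_apply]
  exact prod_univ_sum _ _

end OrientedHypergraph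

namespace SubPC

open OrientedHypergraph

variable {G : OrientedHypergraph V} {U : Set V}

noncomputable instance : Fintype (SubPC G U) :=
  Fintype.ofInjective (fun c => (c.i1, c.i2)) <| by
    rintro ⟨_, _, _, _⟩ ⟨_, _, _, _⟩ h
    cases h
    rfl

theorem isSubContributor_of_head_eq (c : SubPC G U) {W : Set V}
    (f : {v : V // v ∉ U} ≃ {w : V // w ∉ W}) (h : ∀ v, c.head v = f v) :
    c.IsSubContributor W := by
  have hf : c.head = Subtype.val ∘ f := funext h
  rw [IsSubContributor, hf, EquivLike.range_comp, Subtype.range_coe_subtype]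
  exact ⟨Subtype.val_injective.comp f.injective, rfl⟩

noncomputable def headEquiv (c : SubPC G U) {W : Set V} (hc : c.IsSubContributor W) :
    {v : V // v ∉ U} ≃ {w : V // w ∉ W} :=
  (Equiv.ofInjective c.head hc.1).trans (Equiv.setCongr hc.2)

/-- A sub-contributor is the same as a bijection `f : V ∖ U ≃ V ∖ W` together with a weak walk
of length one from each `v` to `f v`. -/
noncomputable def equivLinks (G : OrientedHypergraph V) (U W : Set V) :
    {c : SubPC G U // c.IsSubContributor W} ≃
      {x : ({v : V // v ∉ U} ≃ {w : V // w ∉ W}) × ({v : V // v ∉ U} → G.I × G.I) //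
        ∀ v, x.2 v ∈ G.links v.1 (x.1 v).1} where
  toFun c := ⟨(c.1.headEquiv c.2, fun v => (c.1.i1 v, c.1.i2 v)), fun v =>
    mem_links.2 ⟨c.1.tail_eq v, rfl, c.1.edge_eq v⟩⟩
  invFun x :=
    have hx := fun v => mem_links.1 (x.2 v)
    ⟨⟨fun v => (x.1.2 v).1, fun v => (x.1.2 v).2, fun v => (hx v).1, fun v => (hx v).2.2⟩,
      isSubContributor_of_head_eq _ x.1.1 fun v => (hx v).2.1⟩
  left_inv _ := rfl
  right_inv x :=
    Subtype.ext <| Prod.ext (Equiv.ext fun v => Subtype.ext (mem_links.1 (x.2 v)).2.1) rfl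

theorem walkSign_eq_one_or_neg_one (hsgn : ∀ i, G.sgn i = 1 ∨ G.sgn i = -1) (c : SubPC G U)
    (v : {v : V // v ∉ U}) : c.walkSign v = 1 ∨ c.walkSign v = -1 := by
  rcases hsgn (c.i1 v) with h1 | h1 <;> rcases hsgn (c.i2 v) with h2 | h2 <;>
    simp [walkSign, h1, h2]

theorem walkSign_eq_neg_one_of_backstep (hsgn : ∀ i, G.sgn i = 1 ∨ G.sgn i = -1)
    (c : SubPC G U) {v : {v : V // v ∉ U}} (hv : c.i2 v = c.i1 v) : c.walkSign v = -1 := by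
  rcases hsgn (c.i1 v) with h | h <;> simp [walkSign, hv, h]

noncomputable def arcs (c : SubPC G U) (q : Quotient c.compSetoid) : Finset {v : V // v ∉ U} :=
  {v | Quotient.mk c.compSetoid v.1 = q}

theorem arcCard_eq_card (c : SubPC G U) (q : Quotient c.compSetoid) :
    c.arcCard q = #(c.arcs q) := by
  rw [arcCard, Nat.card_eq_fintype_card, Fintype.card_subtype, arcs]

theorem compSign_eq_prod (c : SubPC G U) (q : Quotient c.compSetoid) :
    c.compSign q = ∏ v ∈ c.arcs q, c.walkSign v := by
  rw [compSign, ← finprod_mem_coe_finset, arcs, coe_filter_univ]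

theorem compSign_eq_one_or_neg_one (hsgn : ∀ i, G.sgn i = 1 ∨ G.sgn i = -1) (c : SubPC G U)
    (q : Quotient c.compSetoid) : c.compSign q = 1 ∨ c.compSign q = -1 := by
  rw [← Int.isUnit_iff, compSign_eq_prod, IsUnit.prod_iff]
  exact fun v _ => Int.isUnit_iff.2 (c.walkSign_eq_one_or_neg_one hsgn v)

theorem arcs_eq_singleton_of_head_eq_self (c : SubPC G U) (hinj : Function.Injective c.head)
    {v₀ : {v : V // v ∉ U}} (hv₀ : c.head v₀ = v₀) :
    c.arcs (Quotient.mk c.compSetoid v₀.1) = {v₀} := by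
  ext v
  simp only [arcs, mem_filter, mem_univ, true_and, mem_singleton]
  refine ⟨fun hv => Subtype.ext ?_, fun hv => hv ▸ rfl⟩
  -- `{v₀}` is closed under the generating relation forwards (`v₀` is fixed by `head`) and
  -- backwards (`head` is injective), hence is a whole component.
  have hclosed :
      ∀ x y, (∃ hx : x ∉ U, c.head ⟨x, hx⟩ = y) → (x = v₀.1 ↔ y = v₀.1) := by
    rintro x y ⟨hx, rfl⟩
    refine ⟨fun h => ?_, fun h => congrArg Subtype.val (hinj (h.trans hv₀.symm))⟩
    subst h
    exact hv₀
  have hker := Setoid.eqvGen_le (s := Setoid.ker (· = v₀.1))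
    (fun x y h => Setoid.ker_def.2 (propext (hclosed x y h))) (Quotient.exact hv)
  exact (Setoid.ker_def.1 hker).mpr rfl

/-- A backstep component contributes `(-1)^1 · (-1) = 1`, as if it were not counted. -/
theorem neg_one_pow_arcCard_mul_compSign (hsgn : ∀ i, G.sgn i = 1 ∨ G.sgn i = -1)
    (c : SubPC G U) (hinj : Function.Injective c.head) (q : Quotient c.compSetoid) :
    (-1 : ℤ) ^ c.arcCard q * c.compSign q =
      (-1) ^ ((if ¬c.IsTrivialClass q ∧ Odd (c.arcCard q) then 1 else 0) +
        (if ¬c.IsTrivialClass q ∧ c.compSign q = -1 then 1 else 0)) := by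
  by_cases htriv : c.IsTrivialClass q
  · obtain ⟨v₀, rfl, hv₀, hback⟩ := id htriv
    rw [arcCard_eq_card, compSign_eq_prod, c.arcs_eq_singleton_of_head_eq_self hinj hv₀,
      card_singleton, prod_singleton, c.walkSign_eq_neg_one_of_backstep hsgn hback]
    simp [htriv]
  · have hs := c.compSign_eq_one_or_neg_one hsgn q
    by_cases hodd : Odd (c.arcCard q)
    · rcases hs with hs | hs <;> simp [htriv, hodd, hodd.neg_one_pow, hs]
    · rcases hs with hs | hs <;>
        simp [htriv, hodd, (Nat.not_odd_iff_even.1 hodd).neg_one_pow, hs]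

theorem prod_sgn_eq_neg_one_pow (hsgn : ∀ i, G.sgn i = 1 ∨ G.sgn i = -1) (c : SubPC G U)
    (hinj : Function.Injective c.head) :
    ∏ v, G.sgn (c.i1 v) * G.sgn (c.i2 v) = (-1) ^ (c.onn + c.nn) := by
  calc ∏ v, G.sgn (c.i1 v) * G.sgn (c.i2 v)
      = ∏ v, -1 * c.walkSign v := by simp [walkSign]
    _ = ∏ q, ∏ v ∈ c.arcs q, -1 * c.walkSign v := (prod_fiberwise _ _ _).symm
    _ = ∏ q, (-1) ^ c.arcCard q * c.compSign q := by
      simp only [prod_mul_distrib, prod_const, arcCard_eq_card, compSign_eq_prod]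
    _ = ∏ q, (-1) ^ ((if ¬c.IsTrivialClass q ∧ Odd (c.arcCard q) then 1 else 0) +
        (if ¬c.IsTrivialClass q ∧ c.compSign q = -1 then 1 else 0)) :=
      prod_congr rfl fun q _ => c.neg_one_pow_arcCard_mul_compSign hsgn hinj q
    _ = (-1) ^ (c.onn + c.nn) := by
      rw [prod_pow_eq_pow_sum, sum_add_distrib, sum_boole, sum_boole, onn, nn,
        Nat.card_eq_fintype_card, Nat.card_eq_fintype_card, Fintype.card_subtype,
        Fintype.card_subtype]
      rfl

theorem sum_prod_lap_eq_sum_prod_sgn (G : OrientedHypergraph V) (U W : Set V) :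
    ∑ f : {v : V // v ∉ U} ≃ {w : V // w ∉ W}, ∏ v, G.lap v.1 (f v).1 =
      ∑ c : {c : SubPC G U // c.IsSubContributor W},
        ∏ v, G.sgn (c.1.i1 v) * G.sgn (c.1.i2 v) := by
  calc
    _ = ∑ f : {v : V // v ∉ U} ≃ {w : V // w ∉ W},
          ∑ g ∈ Fintype.piFinset fun v => G.links v.1 (f v).1,
            ∏ v, G.sgn (g v).1 * G.sgn (g v).2 := by
      simp only [G.prod_lap_eq_sum]
    _ = ∑ x : {x : ({v : V // v ∉ U} ≃ {w : V // w ∉ W}) × ({v : V // v ∉ U} → G.I × G.I) //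
          ∀ v, x.2 v ∈ G.links v.1 (x.1 v).1},
            ∏ v, G.sgn (x.1.2 v).1 * G.sgn (x.1.2 v).2 := by
      rw [← sum_subtype _ mem_filter_univ
          fun x : (_ ≃ _) × (_ → G.I × G.I) => ∏ v, G.sgn (x.2 v).1 * G.sgn (x.2 v).2,
        sum_filter, Fintype.sum_prod_type]
      simp only [← Fintype.mem_piFinset, sum_ite_mem, univ_inter]
    _ = _ := (Fintype.sum_equiv (equivLinks G U W) _ _ fun _ => rfl).symm

end SubPC

theorem all_minors_permanent_general {V : Type} [Fintype V] [DecidableEq V]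
    (G : OrientedHypergraph V) (hsgn : ∀ i, G.sgn i = 1 ∨ G.sgn i = -1)
    (U W : Set V) :
    rectPermanent (fun (v : {v : V // v ∉ U}) (w : {w : V // w ∉ W}) =>
        G.lap v.val w.val) =
      ∑ᶠ c ∈ {c : SubPC G U | c.IsSubContributor W},
        (-1 : ℤ) ^ (SubPC.onn c + SubPC.nn c) := by
  refine (rectPermanent_eq_sum _).trans ?_
  rw [SubPC.sum_prod_lap_eq_sum_prod_sgn, finsum_mem_eq_toFinset_sum,
    sum_subtype _ fun _ => Set.mem_toFinset]
  exact sum_congr rfl fun c _ => c.1.prod_sgn_eq_neg_one_pow hsgn c.2.1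

/-- All-minors contributor expansion: for an oriented hypergraph `G`
and subsets `U, W ⊆ V` with `|U| = |W|`, the permanent of the minor
`[L_G]_{(U;W)}` (delete rows `U` and columns `W` of the Laplacian) equals
`∑_{c ∈ C(U;W;G)} (−1)^{on(c)+nn(c)}`, where `C(U;W;G)` is the set of
sub-contributors out of `V∖U` whose heads land bijectively on `V∖W`, and `on`,
`nn` count the odd and negative non-adjacency-trivial components (paths or
circles). -/
theorem all_minors_permanent {V : Type} [Fintype V] [DecidableEq V]
    (G : OrientedHypergraph V) (hsgn : ∀ i, G.sgn i = 1 ∨ G.sgn i = -1)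
    (U W : Set V) (hUW : Nat.card U = Nat.card W) :
    rectPermanent (fun (v : {v : V // v ∉ U}) (w : {w : V // w ∉ W}) =>
        G.lap v.val w.val) =
      ∑ᶠ c ∈ {c : SubPC G U | c.IsSubContributor W},
        (-1 : ℤ) ^ (SubPC.onn c + SubPC.nn c) :=
  all_minors_permanent_general G hsgn U W
end
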